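/- Let λ̂ := √(Σ₀/Δ)/(2σᵤ). Then S(λ̂) = λ̂, S is differentiable at λ̂ with S′(λ̂) = 0, and there exists ε > 0 such that for every λ⁽⁰⁾ with 0 < |λ⁽⁰⁾ − λ̂| < ε the iterates λ⁽ᵐ⁺¹⁾ := S(λ⁽ᵐ⁾) converge to λ̂ as m → ∞; i.e., for one trading period, Kyle's equilibrium is locally stable with respect to policy iterations for the market makers. -/

import Mathlib

/-!
Write `λ̂ = √(Σ₀/Δ)/(2σᵤ)`, so that `Σ₀ = 4Δσᵤ²λ̂²` and `S(λ) = 2λ̂²λ/(λ̂² + λ²)`. Then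
`1/S(λ) = (1/λ + λ/λ̂²)/2` is Heron's step for `√(1/λ̂²)` in the variable `1/λ`, and like
Heron's method it has a superattracting fixed point:
`S(λ) - λ̂ = -λ̂(λ - λ̂)²/(λ̂² + λ²)`. Hence `|S(λ) - λ̂| ≤ |λ - λ̂|²/λ̂ ≤ |λ - λ̂|/2` whenever
`|λ - λ̂| ≤ λ̂/2`, and the iterates converge geometrically.
-/

open Filter Topology

noncomputable def S1p (Δ σu Sig0 lam : ℝ) : ℝ :=
  2 * lam * Sig0 / (Sig0 + 4 * Δ * σu ^ 2 * lam ^ 2)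

theorem tendsto_iterate_of_dist_le_mul {α : Type*} [PseudoMetricSpace α] {f : α → α}
    {x y : α} {r q : ℝ} (hq₀ : 0 ≤ q) (hq : q < 1)
    (hf : ∀ z, dist z x ≤ r → dist (f z) x ≤ q * dist z x) (hy : dist y x ≤ r) :
    Tendsto (fun n => f^[n] y) atTop (𝓝 x) := by
  have geometric : ∀ n : ℕ, dist (f^[n] y) x ≤ q ^ n * dist y x := by
    intro n
    induction n with
    | zero => simp
    | succ n ih =>
      have hr : dist (f^[n] y) x ≤ r :=
        ih.trans <| (mul_le_of_le_one_left dist_nonneg (pow_le_one₀ hq₀ hq.le)).trans hy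
      calc dist (f^[n + 1] y) x = dist (f (f^[n] y)) x := by rw [Function.iterate_succ_apply']
        _ ≤ q * dist (f^[n] y) x := hf _ hr
        _ ≤ q * (q ^ n * dist y x) := by gcongr
        _ = q ^ (n + 1) * dist y x := by ring
  rw [tendsto_iff_dist_tendsto_zero]
  refine squeeze_zero (fun _ => dist_nonneg) geometric ?_
  simpa using (tendsto_pow_atTop_nhds_zero_of_lt_one hq₀ hq).mul_const (dist y x)

noncomputable def heronInvStep (a x : ℝ) : ℝ :=
  2 * a ^ 2 * x / (a ^ 2 + x ^ 2)

section heronInvStep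

variable {a : ℝ} (ha : a ≠ 0)
include ha

theorem heronInvStep_sub (x : ℝ) :
    heronInvStep a x - a = -(a * (x - a) ^ 2) / (a ^ 2 + x ^ 2) := by
  have : a ^ 2 + x ^ 2 ≠ 0 := by positivity
  unfold heronInvStep
  field_simp
  ring

theorem heronInvStep_self : heronInvStep a a = a := by
  simpa [sub_eq_zero] using heronInvStep_sub ha a

theorem hasDerivAt_heronInvStep_self : HasDerivAt (heronInvStep a) 0 a := by
  have hden : a ^ 2 + a ^ 2 ≠ 0 := by positivity
  have hnum : HasDerivAt (fun x => 2 * a ^ 2 * x) (2 * a ^ 2) a := by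
    simpa using (hasDerivAt_id a).const_mul (2 * a ^ 2)
  have hdenom : HasDerivAt (fun x => a ^ 2 + x ^ 2) (2 * a) a := by
    simpa using (hasDerivAt_pow 2 a).const_add (a ^ 2)
  exact (hnum.div hdenom hden).congr_deriv (by ring)

theorem abs_heronInvStep_sub_le (x : ℝ) : |heronInvStep a x - a| ≤ (x - a) ^ 2 / |a| := by
  have habs : 0 < |a| := abs_pos.2 ha
  calc |heronInvStep a x - a| = |a| * (x - a) ^ 2 / (a ^ 2 + x ^ 2) := by
        rw [heronInvStep_sub ha, abs_div, abs_neg, abs_mul, abs_sq,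
          abs_of_pos (by positivity : 0 < a ^ 2 + x ^ 2)]
    _ ≤ |a| * (x - a) ^ 2 / |a| ^ 2 := by
        gcongr
        rw [sq_abs]
        exact le_add_of_nonneg_right (sq_nonneg x)
    _ = (x - a) ^ 2 / |a| := by field_simp

theorem abs_heronInvStep_sub_le_half {x : ℝ} (hx : |x - a| ≤ |a| / 2) :
    |heronInvStep a x - a| ≤ 1 / 2 * |x - a| := by
  calc |heronInvStep a x - a| ≤ (x - a) ^ 2 / |a| := abs_heronInvStep_sub_le ha x
    _ = |x - a| * (|x - a| / |a|) := by rw [← sq_abs]; ring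
    _ ≤ |x - a| * (1 / 2) := by
      have : |x - a| / |a| ≤ 1 / 2 := by
        rwa [div_le_iff₀ (abs_pos.2 ha), one_div_mul_eq_div]
      gcongr
    _ = 1 / 2 * |x - a| := mul_comm _ _

theorem tendsto_iterate_heronInvStep {x : ℝ} (hx : |x - a| ≤ |a| / 2) :
    Tendsto (fun m => (heronInvStep a)^[m] x) atTop (𝓝 a) := by
  refine tendsto_iterate_of_dist_le_mul (r := |a| / 2) (q := 1 / 2) (by norm_num) (by norm_num)
    ?_ hx
  simpa only [Real.dist_eq] using fun _ => abs_heronInvStep_sub_le_half ha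

end heronInvStep

theorem S1p_eq_heronInvStep {Δ σu Sig0 a : ℝ} (hSig : Sig0 ≠ 0)
    (h : Sig0 = 4 * Δ * σu ^ 2 * a ^ 2) : S1p Δ σu Sig0 = heronInvStep a := by
  have hc : 4 * Δ * σu ^ 2 ≠ 0 := left_ne_zero_of_mul (h ▸ hSig)
  funext x
  rw [S1p, heronInvStep, h, ← mul_div_mul_left (2 * a ^ 2 * x) _ hc]
  ring_nf

/-- With `λ̂ := √(Sig0/Δ)/(2 σu)`: `S(λ̂) = λ̂`, `S` is differentiable at `λ̂` with
`S'(λ̂) = 0`, and there is `ε > 0` such that every starting value `λ⁰` with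
`0 < |λ⁰ - λ̂| < ε` has iterates `λ⁽ᵐ⁺¹⁾ := S(λ⁽ᵐ⁾)` converging to `λ̂`; i.e., for one
trading period Kyle's equilibrium is locally stable with respect to policy iterations
for the market makers. -/
theorem market_maker_one_period_locally_stable (Δ σu Sig0 : ℝ) (hΔ : 0 < Δ)
    (hσ : 0 < σu) (hSig : 0 < Sig0) :
    S1p Δ σu Sig0 (Real.sqrt (Sig0 / Δ) / (2 * σu)) = Real.sqrt (Sig0 / Δ) / (2 * σu) ∧
    HasDerivAt (S1p Δ σu Sig0) 0 (Real.sqrt (Sig0 / Δ) / (2 * σu)) ∧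
    ∃ ε > 0, ∀ lam0 : ℝ,
      0 < |lam0 - Real.sqrt (Sig0 / Δ) / (2 * σu)| →
      |lam0 - Real.sqrt (Sig0 / Δ) / (2 * σu)| < ε →
      Tendsto (fun m : ℕ => (S1p Δ σu Sig0)^[m] lam0) atTop
        (nhds (Real.sqrt (Sig0 / Δ) / (2 * σu))) := by
  set L := Real.sqrt (Sig0 / Δ) / (2 * σu)
  have hL : L ≠ 0 := (div_pos (Real.sqrt_pos.2 (div_pos hSig hΔ)) (by positivity)).ne'
  have hSigL : Sig0 = 4 * Δ * σu ^ 2 * L ^ 2 := by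
    rw [div_pow, Real.sq_sqrt (div_pos hSig hΔ).le]
    field_simp
    norm_num
  rw [S1p_eq_heronInvStep hSig.ne' hSigL]
  exact ⟨heronInvStep_self hL, hasDerivAt_heronInvStep_self hL, |L| / 2, by positivity,
    fun _ _ hx => tendsto_iterate_heronInvStep hL hx.le⟩
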